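/- arXiv:2011.14441 — 10 statements merged into one kernel-verified Lean document; each statement's English description precedes it below -/
import Mathlib

section
/- Let H be a Hilbert space (over ℝ or ℂ) and T : H → H a bounded linear operator with ‖T‖ ≤ 1. Let Π denote the orthogonal projection of H onto the kernel of (I − T) (a closed subspace). Then the following are equivalent: (a) for every x ∈ H, ‖T^{k+1}x − T^k x‖ → 0 as k → ∞; (b) for every x ∈ H, the sequence T^k x converges to Π x as k → ∞. -/
/-!
Write `x = Π x + (x - Π x)`. The first term is fixed by every `T ^ k`. The second lies in
`ker (1 - T)ᗮ`, which is the closure of `range (1 - T)`: a vector `x` orthogonal to that range has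
`⟪T x, x⟫ = ‖x‖² ≥ ‖T x‖ ‖x‖` and is therefore fixed by `T`. On `range (1 - T)` we have
`T ^ k (w - T w) = T ^ k w - T ^ (k + 1) w → 0` by asymptotic regularity, and this passes to the
closure because the powers of `T` are uniformly `1`-Lipschitz. The converse is immediate.
-/

open Filter Topology

namespace ContinuousLinearMap

section Normed

variable {𝕜 E : Type*} [NontriviallyNormedField 𝕜] [NormedAddCommGroup E] [NormedSpace 𝕜 E]
  (T : E →L[𝕜] E)

theorem pow_apply_of_mem_ker_one_sub {x : E} (hx : x ∈ (1 - T : E →L[𝕜] E).ker) (k : ℕ) :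
    (T ^ k) x = x := by
  have hfix : T x = x := (sub_eq_zero.mp hx).symm
  rw [FunLike.coe_pow_eq_iterate]
  exact Function.iterate_fixed hfix k

theorem equicontinuous_pow (hT : ‖T‖ ≤ 1) : Equicontinuous fun k : ℕ => ⇑(T ^ k) := by
  refine (LipschitzWith.uniformEquicontinuous _ 1 fun k => ?_).equicontinuous
  simpa [FunLike.coe_pow_eq_iterate] using (T.lipschitz.weaken hT : LipschitzWith 1 T).iterate k

theorem tendsto_pow_apply_zero_of_mem_closure_range_one_sub (hT : ‖T‖ ≤ 1)
    (hreg : ∀ x : E, Tendsto (fun k : ℕ => ‖(T ^ (k + 1)) x - (T ^ k) x‖) atTop (𝓝 0))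
    {y : E} (hy : y ∈ closure ((1 - T : E →L[𝕜] E).range : Set E)) :
    Tendsto (fun k : ℕ => (T ^ k) y) atTop (𝓝 0) := by
  have hclosed : IsClosed {x : E | Tendsto (fun k : ℕ => (T ^ k) x) atTop (𝓝 0)} :=
    (T.equicontinuous_pow hT).isClosed_setOfPred_tendsto continuous_const
  refine closure_minimal (Set.forall_mem_range.2 fun w => ?_) hclosed hy
  have hnorm : ∀ k : ℕ, ‖(T ^ k) ((1 - T) w)‖ = ‖(T ^ (k + 1)) w - (T ^ k) w‖ := fun k => by
    rw [sub_apply, one_apply_eq_self, map_sub, pow_succ, mul_apply_eq_comp, norm_sub_rev]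
  exact tendsto_zero_iff_norm_tendsto_zero.2 (by simpa only [coe_coe, hnorm] using hreg w)

end Normed

section Hilbert

variable {𝕜 H : Type*} [RCLike 𝕜] [NormedAddCommGroup H] [InnerProductSpace 𝕜 H]
  [CompleteSpace H] (T : H →L[𝕜] H)

theorem orthogonal_ker_one_sub_le_closure_range (hT : ‖T‖ ≤ 1) :
    ((1 - T : H →L[𝕜] H).ker)ᗮ ≤ ((1 - T : H →L[𝕜] H).range).topologicalClosure := by
  rw [← Submodule.orthogonal_orthogonal_eq_closure]
  refine Submodule.orthogonal_le fun x hx => ?_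
  have hinner : ∀ y, inner 𝕜 (T y) x = inner 𝕜 y x := fun y => by
    have h := hx _ (LinearMap.mem_range_self _ y)
    rwa [coe_coe, sub_apply, one_apply_eq_self, inner_sub_left, sub_eq_zero, eq_comm] at h
  have hfix : T x = x := eq_of_norm_le_re_inner_eq_norm_sq (𝕜 := 𝕜)
    (by simpa using T.le_of_opNorm_le hT x) (by simp [hinner])
  simp [hfix]

theorem tendsto_pow_apply_orthogonalProjection (hT : ‖T‖ ≤ 1)
    (hreg : ∀ x : H, Tendsto (fun k : ℕ => ‖(T ^ (k + 1)) x - (T ^ k) x‖) atTop (𝓝 0)) (x : H) :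
    Tendsto (fun k : ℕ => (T ^ k) x) atTop
      (𝓝 (((1 - T : H →L[𝕜] H).ker).orthogonalProjectionOnto x : H)) := by
  set K := (1 - T : H →L[𝕜] H).ker
  set p : H := (K.orthogonalProjectionOnto x : H)
  have hperp : x - p ∈ ((1 - T : H →L[𝕜] H).range).topologicalClosure :=
    T.orthogonal_ker_one_sub_le_closure_range hT (K.sub_starProjection_mem_orthogonal x)
  have hfix : ∀ k : ℕ, (T ^ k) p = p :=
    T.pow_apply_of_mem_ker_one_sub (K.orthogonalProjectionOnto x).2
  have hdecomp : ∀ k : ℕ, (T ^ k) x = (T ^ k) (x - p) + p := fun k => by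
    rw [map_sub, hfix, sub_add_cancel]
  simpa only [hdecomp, zero_add] using
    (T.tendsto_pow_apply_zero_of_mem_closure_range_one_sub hT hreg hperp).add_const p

end Hilbert

end ContinuousLinearMap

/-- For a non-expansive bounded linear operator `T` on a Hilbert space,
asymptotic regularity is equivalent to convergence of the powers `T^k x`
to the orthogonal projection of `x` onto `ker (I - T)`. -/
theorem stmt_0 {𝕜 H : Type*} [RCLike 𝕜] [NormedAddCommGroup H] [InnerProductSpace 𝕜 H]
    [CompleteSpace H] (T : H →L[𝕜] H) (hT : ‖T‖ ≤ 1) :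
    (∀ x : H, Tendsto (fun k : ℕ => ‖(T ^ (k + 1)) x - (T ^ k) x‖) atTop (nhds 0)) ↔
      (∀ x : H, Tendsto (fun k : ℕ => (T ^ k) x) atTop
        (nhds (Submodule.orthogonalProjectionOnto (LinearMap.ker (((1 : H →L[𝕜] H) - T : H →L[𝕜] H) : H →ₗ[𝕜] H)) x : H))) := by
  refine ⟨T.tendsto_pow_apply_orthogonalProjection hT, fun h x => ?_⟩
  have hsucc := (h x).comp (tendsto_add_atTop_nat 1)
  simpa only [Function.comp_def, sub_self, norm_zero] using (hsucc.sub (h x)).norm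
end

section
/- Let H be a Hilbert space and T : H → H a bounded linear operator that is non-expansive (‖T‖ ≤ 1) and asymptotically regular, and such that 1 is not an eigenvalue of T (i.e. ker(I − T) = {0}). Given z ∈ H, define the affine map S : H → H by S x = T x + z, and suppose S has a fixed point x̄ (i.e. x̄ = T x̄ + z). Then x̄ is the unique fixed point of S, and for every x₀ ∈ H the sequence of iterates S^k x₀ converges to x̄. -/
/-!
Since `S^k x₀ = T^k (x₀ - x̄) + x̄`, it suffices that `T^k w → 0` for every `w`. Asymptotic
regularity gives this for `w = u - T u`. A contraction of a Hilbert space and its adjoint have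
the same fixed points, so `range (1 - T)` is dense: its orthogonal complement is
`ker (1 - T*) = ker (1 - T) = 0`. Finally, the powers `T^k` are uniformly `1`-Lipschitz, so the
set of `w` with `T^k w → 0` is closed, hence everything.
-/

open Filter Topology
open scoped InnerProductSpace InnerProduct

namespace ContinuousLinearMap

theorem iterate_apply_add_const {R M : Type*} [Semiring R] [TopologicalSpace M] [AddCommGroup M]
    [Module R M] (T : M →L[R] M) {z xbar : M} (hfix : xbar = T xbar + z) (x : M) (k : ℕ) :
    (fun x => T x + z)^[k] x = (T ^ k) (x - xbar) + xbar := by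
  induction k with
  | zero => simp
  | succ k ih =>
    rw [Function.iterate_succ_apply', ih, map_add, add_assoc, ← hfix, pow_succ', mul_apply_eq_comp]

section NormedSpace

variable {𝕜 E : Type*} [NontriviallyNormedField 𝕜] [NormedAddCommGroup E] [NormedSpace 𝕜 E]
  {T : E →L[𝕜] E}

theorem uniformEquicontinuous_pow_apply (hT : ‖T‖ ≤ 1) :
    UniformEquicontinuous fun (k : ℕ) (x : E) => (T ^ k) x := by
  have hT₁ : LipschitzWith 1 T := T.lipschitz.weaken (by exact_mod_cast hT)
  refine LipschitzWith.uniformEquicontinuous _ 1 fun k => ?_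
  simpa [FunLike.coe_pow_eq_iterate] using hT₁.iterate k

theorem tendsto_pow_apply_sub_self_apply
    (hreg : ∀ x : E, Tendsto (fun k : ℕ => ‖(T ^ (k + 1)) x - (T ^ k) x‖) atTop (𝓝 0)) (u : E) :
    Tendsto (fun k : ℕ => (T ^ k) (u - T u)) atTop (𝓝 0) := by
  rw [tendsto_zero_iff_norm_tendsto_zero]
  refine (hreg u).congr fun k => ?_
  rw [map_sub, pow_succ, mul_apply_eq_comp, norm_sub_rev]

theorem tendsto_pow_apply_zero_of_denseRange_one_sub (hT : ‖T‖ ≤ 1)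
    (hreg : ∀ x : E, Tendsto (fun k : ℕ => ‖(T ^ (k + 1)) x - (T ^ k) x‖) atTop (𝓝 0))
    (hdense : DenseRange ⇑(1 - T)) (x : E) :
    Tendsto (fun k : ℕ => (T ^ k) x) atTop (𝓝 0) := by
  have hclosed : IsClosed {x : E | Tendsto (fun k : ℕ => (T ^ k) x) atTop (𝓝 0)} :=
    (uniformEquicontinuous_pow_apply hT).equicontinuous.isClosed_setOfPred_tendsto continuous_const
  refine hclosed.closure_subset_iff.mpr ?_ (hdense x)
  rintro _ ⟨u, rfl⟩
  exact tendsto_pow_apply_sub_self_apply hreg u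

end NormedSpace

section InnerProductSpace

variable {𝕜 H : Type*} [RCLike 𝕜] [NormedAddCommGroup H] [InnerProductSpace 𝕜 H] [CompleteSpace H]
  {T : H →L[𝕜] H}

theorem adjoint_apply_eq_self_of_apply_eq_self (hT : ‖T‖ ≤ 1) {x : H} (hx : T x = x) :
    (T†) x = x := by
  have hre : RCLike.re ⟪(T†) x, x⟫_𝕜 = ‖x‖ ^ 2 := by
    rw [adjoint_inner_left, hx, inner_self_eq_norm_sq]
  have hnorm : ‖(T†) x‖ ≤ ‖x‖ :=
    (T†).le_of_opNorm_le (by rwa [adjoint.norm_map]) x |>.trans_eq (one_mul _)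
  have hsq : ‖(T†) x - x‖ ^ 2 ≤ 0 := by
    rw [norm_sub_sq (𝕜 := 𝕜), hre]
    nlinarith [mul_le_mul hnorm hnorm (norm_nonneg _) (norm_nonneg x)]
  exact sub_eq_zero.mp (norm_eq_zero.mp (by nlinarith [norm_nonneg ((T†) x - x)]))

theorem apply_eq_self_iff_adjoint_apply_eq_self (hT : ‖T‖ ≤ 1) {x : H} :
    T x = x ↔ (T†) x = x := by
  refine ⟨adjoint_apply_eq_self_of_apply_eq_self hT, fun hx => ?_⟩
  simpa using adjoint_apply_eq_self_of_apply_eq_self (T := T†) (by rwa [adjoint.norm_map]) hx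

theorem denseRange_one_sub (hT : ‖T‖ ≤ 1)
    (hker : LinearMap.ker ((1 - T : H →L[𝕜] H) : H →ₗ[𝕜] H) = ⊥) :
    DenseRange ⇑(1 - T) := by
  have horth : (LinearMap.range ((1 - T : H →L[𝕜] H) : H →ₗ[𝕜] H))ᗮ = ⊥ := by
    rw [orthogonal_range, map_sub, adjoint_one, ← hker]
    ext x
    simp only [LinearMap.mem_ker, coe_coe, sub_apply, one_apply_eq_self, sub_eq_zero]
    rw [eq_comm, ← apply_eq_self_iff_adjoint_apply_eq_self hT, eq_comm]
  have hdense := Submodule.dense_iff_topologicalClosure_eq_top.mpr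
    (Submodule.topologicalClosure_eq_top_iff.mpr horth)
  simpa only [DenseRange, LinearMap.coe_range, coe_coe] using hdense

end InnerProductSpace

end ContinuousLinearMap

/-- If `T` is linear, non-expansive, asymptotically regular and `1` is not an
eigenvalue of `T`, then for the affine map `S x = T x + z` with fixed point `x̄`,
the fixed point is unique and all iterates `S^[k] x₀` converge to it. -/
theorem stmt_1 {𝕜 H : Type*} [RCLike 𝕜] [NormedAddCommGroup H] [InnerProductSpace 𝕜 H]
    [CompleteSpace H] (T : H →L[𝕜] H) (hT : ‖T‖ ≤ 1)
    (hreg : ∀ x : H, Tendsto (fun k : ℕ => ‖(T ^ (k + 1)) x - (T ^ k) x‖) atTop (nhds 0))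
    (hker : LinearMap.ker (((1 : H →L[𝕜] H) - T : H →L[𝕜] H) : H →ₗ[𝕜] H) = ⊥)
    (z xbar : H) (hfix : xbar = T xbar + z) :
    (∀ y : H, y = T y + z → y = xbar) ∧
      ∀ x₀ : H, Tendsto (fun k : ℕ => (fun x => T x + z)^[k] x₀) atTop (nhds xbar) := by
  refine ⟨fun y hy => ?_, fun x₀ => ?_⟩
  · have hmem : y - xbar ∈ LinearMap.ker (((1 : H →L[𝕜] H) - T : H →L[𝕜] H) : H →ₗ[𝕜] H) := by
      simp only [LinearMap.mem_ker, ContinuousLinearMap.coe_coe, sub_apply, one_apply_eq_self,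
        map_sub]
      linear_combination (norm := module) hy - hfix
    rw [hker, Submodule.mem_bot, sub_eq_zero] at hmem
    exact hmem
  · have hpow := T.tendsto_pow_apply_zero_of_denseRange_one_sub hT hreg
      (T.denseRange_one_sub hT hker) (x₀ - xbar)
    simpa [T.iterate_apply_add_const hfix] using hpow.add_const xbar
end

section
/- Let H be a Hilbert space, T : H → H a bounded linear operator, and c > 0 a constant such that ‖(I − T)x‖² ≤ c(‖x‖² − ‖Tx‖²) for all x ∈ H. Then T is non-expansive (‖T‖ ≤ 1) and asymptotically regular (for every x₀ ∈ H, ‖T^{k+1}x₀ − T^k x₀‖ → 0 as k → ∞). -/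
/-!
The hypothesis forces `‖T x‖ ≤ ‖x‖`, so along an orbit the squared norms `‖Tᵏ x‖²` decrease
and converge. Applied at `Tᵏ x`, the hypothesis bounds `‖Tᵏ⁺¹ x - Tᵏ x‖²` by `c` times the
difference of two consecutive terms of this convergent sequence, which tends to `0`.
-/

open Filter Topology

theorem Antitone.tendsto_sub_succ_atTop_zero {a : ℕ → ℝ} (ha : Antitone a)
    (hbdd : BddBelow (Set.range a)) :
    Tendsto (fun k => a k - a (k + 1)) atTop (𝓝 0) := by
  have hlim := tendsto_atTop_ciInf ha hbdd
  simpa using hlim.sub (hlim.comp (tendsto_add_atTop_nat 1))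

section NormSubSqLe

variable {E : Type*} [SeminormedAddCommGroup E] {T : E → E} {c : ℝ}

theorem norm_apply_le_of_norm_sub_sq_le (hc : 0 < c) {x : E}
    (h : ‖x - T x‖ ^ 2 ≤ c * (‖x‖ ^ 2 - ‖T x‖ ^ 2)) : ‖T x‖ ≤ ‖x‖ := by
  have hsq : 0 ≤ ‖x‖ ^ 2 - ‖T x‖ ^ 2 := nonneg_of_mul_nonneg_right ((sq_nonneg _).trans h) hc
  exact (pow_le_pow_iff_left₀ (norm_nonneg _) (norm_nonneg _) two_ne_zero).mp (by linarith)

theorem tendsto_norm_iterate_succ_sub_iterate (hc : 0 < c)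
    (h : ∀ x, ‖x - T x‖ ^ 2 ≤ c * (‖x‖ ^ 2 - ‖T x‖ ^ 2)) (x : E) :
    Tendsto (fun k => ‖T^[k + 1] x - T^[k] x‖) atTop (𝓝 0) := by
  set a : ℕ → ℝ := fun k => ‖T^[k] x‖ ^ 2
  have ha : Antitone a := antitone_nat_of_succ_le fun k => by
    simp only [a, Function.iterate_succ_apply']
    gcongr
    exact norm_apply_le_of_norm_sub_sq_le hc (h _)
  have hdiff : Tendsto (fun k => c * (a k - a (k + 1))) atTop (𝓝 0) := by
    simpa using (ha.tendsto_sub_succ_atTop_zero ⟨0, by rintro _ ⟨k, rfl⟩; positivity⟩).const_mul c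
  have hsq : Tendsto (fun k => ‖T^[k + 1] x - T^[k] x‖ ^ 2) atTop (𝓝 0) :=
    squeeze_zero (fun k => sq_nonneg _) (fun k => by
      simpa only [a, Function.iterate_succ_apply', norm_sub_rev] using h (T^[k] x)) hdiff
  simpa [Real.sqrt_sq (norm_nonneg _)] using hsq.sqrt

end NormSubSqLe

theorem stmt_2_general {𝕜 H : Type*} [RCLike 𝕜] [NormedAddCommGroup H] [InnerProductSpace 𝕜 H]
    (T : H →L[𝕜] H) (c : ℝ) (hc : 0 < c)
    (h : ∀ x : H, ‖x - T x‖ ^ 2 ≤ c * (‖x‖ ^ 2 - ‖T x‖ ^ 2)) :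
    ‖T‖ ≤ 1 ∧
      ∀ x₀ : H, Tendsto (fun k : ℕ => ‖(T ^ (k + 1)) x₀ - (T ^ k) x₀‖) atTop (nhds 0) := by
  refine ⟨T.opNorm_le_bound zero_le_one fun x => ?_, fun x₀ => ?_⟩
  · simpa using norm_apply_le_of_norm_sub_sq_le hc (h x)
  · simpa only [FunLike.coe_pow_eq_iterate] using tendsto_norm_iterate_succ_sub_iterate hc h x₀

/-- If `‖(I - T)x‖² ≤ c(‖x‖² - ‖Tx‖²)` for all `x`, then `T` is non-expansive
and asymptotically regular. -/
theorem stmt_2 {𝕜 H : Type*} [RCLike 𝕜] [NormedAddCommGroup H] [InnerProductSpace 𝕜 H]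
    [CompleteSpace H] (T : H →L[𝕜] H) (c : ℝ) (hc : 0 < c)
    (h : ∀ x : H, ‖x - T x‖ ^ 2 ≤ c * (‖x‖ ^ 2 - ‖T x‖ ^ 2)) :
    ‖T‖ ≤ 1 ∧
      ∀ x₀ : H, Tendsto (fun k : ℕ => ‖(T ^ (k + 1)) x₀ - (T ^ k) x₀‖) atTop (nhds 0) :=
  stmt_2_general T c hc h
end

section
/- Let H be a complex Hilbert space and T : H → H a bounded self-adjoint linear operator with ‖T‖ ≤ 1 such that −1 is not an eigenvalue of T (ker(I + T) = {0}). Then T is asymptotically regular: for every x ∈ H, ‖T^{k+1}x − T^k x‖ → 0 as k → ∞. -/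
/-!
For `x = (1 + T) u` the difference `T^(k+1) x - T^k x` is `-(T^k u - T^(k+2) u)`. As `T` is
self-adjoint, `⟪T^k u, T^(k+2) u⟫ = ‖T^(k+1) u‖²`, so `‖T^k u - T^(k+2) u‖²` is the second
difference `a k - 2 a (k+1) + a (k+2)` of the non-increasing sequence `a k = ‖T^k u‖²`, which
converges; hence the difference tends to zero. The range of the self-adjoint operator `1 + T` is
dense because its kernel is trivial, and the set of `x` for which `T^(k+1) x - T^k x → 0` is
closed because the operators `T^(k+1) - T^k` are uniformly bounded by `2`.
-/

open Filter Topology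
open scoped InnerProductSpace

namespace ContinuousLinearMap

variable {𝕜 E : Type*} [RCLike 𝕜] [NormedAddCommGroup E]

section Normed

variable [NormedSpace 𝕜 E] {T : E →L[𝕜] E}

theorem norm_pow_le_one_of_norm_le_one (hT : ‖T‖ ≤ 1) (k : ℕ) : ‖T ^ k‖ ≤ 1 := by
  induction k with
  | zero => exact norm_id_le
  | succ k ih =>
    rw [pow_succ']
    exact (norm_mul_le _ _).trans (mul_le_one₀ hT (norm_nonneg _) ih)

theorem isClosed_setOf_tendsto_pow_succ_sub_pow (hT : ‖T‖ ≤ 1) :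
    IsClosed {x : E | Tendsto (fun k : ℕ => (T ^ (k + 1)) x - (T ^ k) x) atTop (𝓝 0)} := by
  have hLip (k : ℕ) : LipschitzWith 2 (T ^ (k + 1) - T ^ k) := by
    refine (T ^ (k + 1) - T ^ k).lipschitzWith_of_opNorm_le ?_
    have := norm_sub_le (T ^ (k + 1)) (T ^ k)
    have := norm_pow_le_one_of_norm_le_one hT (k + 1)
    have := norm_pow_le_one_of_norm_le_one hT k
    push_cast
    linarith
  exact (LipschitzWith.uniformEquicontinuous _ 2 hLip).equicontinuous.isClosed_setOfPred_tendsto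
    continuous_const

theorem exists_tendsto_norm_pow_apply_sq (hT : ‖T‖ ≤ 1) (x : E) :
    ∃ L, Tendsto (fun k : ℕ => ‖(T ^ k) x‖ ^ 2) atTop (𝓝 L) := by
  have hanti : Antitone fun k : ℕ => ‖(T ^ k) x‖ ^ 2 := antitone_nat_of_succ_le fun k => by
    rw [pow_succ' T k, mul_apply_eq_comp]
    gcongr
    simpa using T.le_of_opNorm_le hT ((T ^ k) x)
  exact ⟨_, tendsto_atTop_ciInf hanti ⟨0, by rintro _ ⟨k, rfl⟩; positivity⟩⟩

theorem pow_succ_apply_sub_pow_apply_one_add (T : E →L[𝕜] E) (k : ℕ) (u : E) :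
    (T ^ (k + 1)) ((1 + T) u) - (T ^ k) ((1 + T) u) = -((T ^ k) u - (T ^ (k + 2)) u) := by
  rw [add_apply, one_apply_eq_self, map_add, map_add, ← mul_apply_eq_comp (T ^ (k + 1)),
    ← mul_apply_eq_comp (T ^ k), ← pow_succ, ← pow_succ]
  abel

end Normed

section Inner

variable [InnerProductSpace 𝕜 E] [CompleteSpace E] {T : E →L[𝕜] E}

theorem _root_.IsSelfAdjoint.norm_sub_apply_apply_sq (hT : IsSelfAdjoint T) (x : E) :
    ‖x - T (T x)‖ ^ 2 = ‖x‖ ^ 2 - 2 * ‖T x‖ ^ 2 + ‖T (T x)‖ ^ 2 := by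
  have h : ⟪T x, T x⟫_𝕜 = ⟪x, T (T x)⟫_𝕜 := hT.isSymmetric x (T x)
  rw [norm_sub_sq (𝕜 := 𝕜), ← h, inner_self_eq_norm_sq (𝕜 := 𝕜)]

theorem _root_.IsSelfAdjoint.denseRange_of_ker_eq_bot (hT : IsSelfAdjoint T)
    (hker : LinearMap.ker (T : E →ₗ[𝕜] E) = ⊥) : DenseRange T := by
  change Dense (LinearMap.range (T : E →ₗ[𝕜] E) : Set E)
  rw [Submodule.dense_iff_topologicalClosure_eq_top, Submodule.topologicalClosure_eq_top_iff,
    orthogonal_range, hT.adjoint_eq]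
  exact hker

theorem _root_.IsSelfAdjoint.tendsto_pow_apply_sub_pow_add_two_apply (hT : IsSelfAdjoint T)
    (hT1 : ‖T‖ ≤ 1) (x : E) :
    Tendsto (fun k : ℕ => (T ^ k) x - (T ^ (k + 2)) x) atTop (𝓝 0) := by
  obtain ⟨L, hL⟩ := exists_tendsto_norm_pow_apply_sq hT1 x
  have hsq : Tendsto (fun k : ℕ => ‖(T ^ k) x - (T ^ (k + 2)) x‖ ^ 2) atTop (𝓝 0) := by
    have hsecond := (hL.sub ((hL.comp (tendsto_add_atTop_nat 1)).const_mul 2)).add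
      (hL.comp (tendsto_add_atTop_nat 2))
    convert hsecond using 1
    · ext k
      simp only [Function.comp_apply, FunLike.coe_pow_eq_iterate, Function.iterate_succ_apply']
      exact hT.norm_sub_apply_apply_sq _
    · ring_nf
  rw [tendsto_zero_iff_norm_tendsto_zero]
  simpa [Real.sqrt_sq (norm_nonneg _)] using hsq.sqrt

end Inner

end ContinuousLinearMap

/-- A self-adjoint non-expansive operator on a complex Hilbert space such that `-1`
is not an eigenvalue is asymptotically regular. -/
theorem stmt_5 {H : Type*} [NormedAddCommGroup H] [InnerProductSpace ℂ H]
    [CompleteSpace H] (T : H →L[ℂ] H) (hsa : IsSelfAdjoint T) (hT : ‖T‖ ≤ 1)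
    (hker : LinearMap.ker (((1 : H →L[ℂ] H) + T : H →L[ℂ] H) : H →ₗ[ℂ] H) = ⊥) :
    ∀ x : H, Tendsto (fun k : ℕ => ‖(T ^ (k + 1)) x - (T ^ k) x‖) atTop (nhds 0) := by
  have hrange : Set.range ((1 + T : H →L[ℂ] H) : H → H) ⊆
      {x : H | Tendsto (fun k : ℕ => (T ^ (k + 1)) x - (T ^ k) x) atTop (𝓝 0)} := by
    rintro _ ⟨u, rfl⟩
    simpa only [Set.mem_ofPred_eq, ContinuousLinearMap.pow_succ_apply_sub_pow_apply_one_add,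
      neg_zero] using (hsa.tendsto_pow_apply_sub_pow_add_two_apply hT u).neg
  have hdense : DenseRange ((1 + T : H →L[ℂ] H) : H → H) :=
    ((IsSelfAdjoint.one _).add hsa).denseRange_of_ker_eq_bot hker
  intro x
  have hx := (ContinuousLinearMap.isClosed_setOf_tendsto_pow_succ_sub_pow hT).closure_subset_iff.2
    hrange (hdense.closure_range.symm ▸ Set.mem_univ x)
  exact tendsto_zero_iff_norm_tendsto_zero.1 hx
end

section
/- Let H be a complex Hilbert space and T : H → H a bounded self-adjoint linear operator with ‖T‖ ≤ 1 such that neither 1 nor −1 is an eigenvalue of T (ker(I − T) = ker(I + T) = {0}). Then for every x ∈ H, the powers T^k x converge to 0 in norm as k → ∞. -/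
/-!
For a self-adjoint contraction `T`, the norms `‖T^k x‖` decrease to some limit `L`, and
`⟪T^(2k) x, T^(2m) x⟫ = ‖T^(k+m) x‖²`. Hence
`‖T^(2k) x - T^(2m) x‖² = ‖T^(2k) x‖² - 2 ‖T^(k+m) x‖² + ‖T^(2m) x‖² → L² - 2L² + L² = 0`,
so `T^(2k) x` converges to a fixed point `y` of `T²`. Since `(1 - T)(1 + T) = 1 - T²` and both
factors are injective, `y = 0`; monotonicity of the norms then gives `T^k x → 0`.
-/

open Filter Topology

theorem ContinuousLinearMap.antitone_norm_pow_apply {𝕜 E : Type*} [NontriviallyNormedField 𝕜]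
    [SeminormedAddCommGroup E] [NormedSpace 𝕜 E] {T : E →L[𝕜] E} (hT : ‖T‖ ≤ 1) (x : E) :
    Antitone fun k : ℕ => ‖(T ^ k) x‖ :=
  antitone_nat_of_succ_le fun k => by
    rw [pow_succ', mul_apply_eq_comp]
    exact T.le_of_opNorm_le hT _ |>.trans_eq (one_mul _)

theorem ContinuousLinearMap.tendsto_pow_apply_zero_of_pow_two_mul {𝕜 E : Type*}
    [NontriviallyNormedField 𝕜] [SeminormedAddCommGroup E] [NormedSpace 𝕜 E] {T : E →L[𝕜] E}
    (hT : ‖T‖ ≤ 1) {x : E} (h : Tendsto (fun k : ℕ => (T ^ (2 * k)) x) atTop (𝓝 0)) :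
    Tendsto (fun k : ℕ => (T ^ k) x) atTop (𝓝 0) :=
  squeeze_zero_norm (fun n => T.antitone_norm_pow_apply hT x (Nat.mul_div_le n 2))
    (tendsto_norm_zero.comp (h.comp (Nat.tendsto_div_const_atTop two_ne_zero)))

theorem LinearMap.eq_zero_of_sq_apply_eq {R M : Type*} [Ring R] [AddCommGroup M] [Module R M]
    {T : M →ₗ[R] M} (h₁ : LinearMap.ker (1 - T) = ⊥) (h₂ : LinearMap.ker (1 + T) = ⊥) {y : M}
    (hy : (T ^ 2) y = y) : y = 0 := by
  have hfactor : (1 - T) ((1 + T) y) = y - (T ^ 2) y := by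
    simp only [sub_apply, add_apply, Module.End.one_apply, map_add, pow_two, Module.End.mul_apply]
    abel
  rwa [hy, sub_self, ← LinearMap.mem_ker, h₁, Submodule.mem_bot, ← LinearMap.mem_ker, h₂,
    Submodule.mem_bot] at hfactor

section InnerProductSpace

open scoped InnerProductSpace

variable {𝕜 H : Type*} [RCLike 𝕜] [NormedAddCommGroup H] [InnerProductSpace 𝕜 H] [CompleteSpace H]
  {T : H →L[𝕜] H}

theorem IsSelfAdjoint.inner_pow_apply_pow_apply (hT : IsSelfAdjoint T) (x : H) (k m : ℕ) :
    ⟪(T ^ k) x, (T ^ m) x⟫_𝕜 = ⟪x, (T ^ (k + m)) x⟫_𝕜 := by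
  rw [pow_add, mul_apply_eq_comp]
  exact (hT.pow k).isSymmetric _ _

theorem IsSelfAdjoint.norm_pow_two_mul_apply_sub_sq (hT : IsSelfAdjoint T) (x : H) (k m : ℕ) :
    ‖(T ^ (2 * k)) x - (T ^ (2 * m)) x‖ ^ 2 =
      ‖(T ^ (2 * k)) x‖ ^ 2 - 2 * ‖(T ^ (k + m)) x‖ ^ 2 + ‖(T ^ (2 * m)) x‖ ^ 2 := by
  have h : ⟪(T ^ (2 * k)) x, (T ^ (2 * m)) x⟫_𝕜 = ⟪(T ^ (k + m)) x, (T ^ (k + m)) x⟫_𝕜 := by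
    rw [hT.inner_pow_apply_pow_apply, hT.inner_pow_apply_pow_apply]
    ring_nf
  rw [norm_sub_sq (𝕜 := 𝕜), h, inner_self_eq_norm_sq]

theorem IsSelfAdjoint.cauchySeq_pow_two_mul_apply (hT : IsSelfAdjoint T) (hT₁ : ‖T‖ ≤ 1) (x : H) :
    CauchySeq fun k : ℕ => (T ^ (2 * k)) x := by
  set c : ℕ → ℝ := fun k => ‖(T ^ k) x‖
  obtain ⟨L, hc⟩ : ∃ L, Tendsto c atTop (𝓝 L) :=
    ⟨_, tendsto_atTop_ciInf (T.antitone_norm_pow_apply hT₁ x) ⟨0, by rintro _ ⟨k, rfl⟩; positivity⟩⟩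
  have h2 : Tendsto (fun k : ℕ => 2 * k) atTop atTop := tendsto_id.const_mul_atTop' two_pos
  have hsum : Tendsto (fun p : ℕ × ℕ => p.1 + p.2) (atTop ×ˢ atTop) atTop :=
    tendsto_atTop_mono (fun p => Nat.le_add_right _ _) tendsto_fst
  have hsq : Tendsto (fun p : ℕ × ℕ => dist ((T ^ (2 * p.1)) x) ((T ^ (2 * p.2)) x) ^ 2)
      (atTop ×ˢ atTop) (𝓝 (L ^ 2 - 2 * L ^ 2 + L ^ 2)) := by
    simp only [dist_eq_norm, hT.norm_pow_two_mul_apply_sub_sq]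
    exact (((hc.comp h2).comp tendsto_fst).pow 2).sub (((hc.comp hsum).pow 2).const_mul 2)
      |>.add (((hc.comp h2).comp tendsto_snd).pow 2)
  rw [show L ^ 2 - 2 * L ^ 2 + L ^ 2 = 0 by ring] at hsq
  rw [cauchySeq_iff_tendsto_dist_atTop_0, ← prod_atTop_atTop_eq]
  simpa [Real.sqrt_sq dist_nonneg] using hsq.sqrt

end InnerProductSpace

/-- A self-adjoint non-expansive operator on a complex Hilbert space such that
neither `1` nor `-1` is an eigenvalue satisfies `T^k x → 0` for every `x`. -/
theorem stmt_6 {H : Type*} [NormedAddCommGroup H] [InnerProductSpace ℂ H]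
    [CompleteSpace H] (T : H →L[ℂ] H) (hsa : IsSelfAdjoint T) (hT : ‖T‖ ≤ 1)
    (hker1 : LinearMap.ker (((1 : H →L[ℂ] H) - T : H →L[ℂ] H) : H →ₗ[ℂ] H) = ⊥)
    (hker2 : LinearMap.ker (((1 : H →L[ℂ] H) + T : H →L[ℂ] H) : H →ₗ[ℂ] H) = ⊥) :
    ∀ x : H, Tendsto (fun k : ℕ => (T ^ k) x) atTop (nhds 0) := by
  intro x
  obtain ⟨y, hy⟩ := cauchySeq_tendsto_of_complete (hsa.cauchySeq_pow_two_mul_apply hT x)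
  have hfix : (T ^ 2) y = y := by
    refine isFixedPt_of_tendsto_iterate (x := x) ?_ (T ^ 2).continuous.continuousAt
    simpa only [← FunLike.coe_pow_eq_iterate, ← pow_mul] using hy
  have hy0 : y = 0 := LinearMap.eq_zero_of_sq_apply_eq (T := (T : H →ₗ[ℂ] H))
    (by simpa using hker1) (by simpa using hker2) (by rwa [← ContinuousLinearMap.toLinearMap_pow])
  exact T.tendsto_pow_apply_zero_of_pow_two_mul hT (hy0 ▸ hy)
end

section
/- Let λ : ℕ → ℝ with λ_n > 0 for all n, T > 0, and z ∈ ℓ²(ℕ, ℝ). Suppose the problem is consistent, i.e. there exists φ̄ ∈ ℓ²(ℕ, ℝ) with (1 − tanh(λ_n T)²) φ̄_n = z_n for all n. Then for every φ₀ ∈ ℓ²(ℕ, ℝ), the sequence defined recursively by φ_{k+1, n} = tanh(λ_n T)² · φ_{k, n} + z_n converges in the ℓ² norm to φ̄ as k → ∞. -/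
open Filter

lemma tanh_sq_lt_one (x : ℝ) : Real.tanh x ^ 2 < 1 := by
  rw [Real.tanh_eq_sinh_div_cosh, div_pow, div_lt_one (by positivity : (0:ℝ) < Real.cosh x ^ 2)]
  nlinarith [Real.cosh_sq_sub_sinh_sq x]

/-- Convergence of the Maz'ya–Kozlov iteration for the elliptic Cauchy problem in
diagonalized form: if the problem is consistent, i.e. `(1 - tanh(λₙT)²) φ̄ₙ = zₙ`
for some `φ̄ ∈ ℓ²`, then for any starting point the iteration
`φ_{k+1,n} = tanh(λₙT)² φ_{k,n} + zₙ` converges to `φ̄` in `ℓ²`. -/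
theorem stmt_8 (lam : ℕ → ℝ) (hlam : ∀ n, 0 < lam n) (T : ℝ) (hT : 0 < T)
    (z phibar : lp (fun _ : ℕ => ℝ) 2)
    (hcons : ∀ n, (1 - Real.tanh (lam n * T) ^ 2) * phibar n = z n)
    (phi : ℕ → lp (fun _ : ℕ => ℝ) 2)
    (hrec : ∀ (k : ℕ) (n : ℕ),
      phi (k + 1) n = Real.tanh (lam n * T) ^ 2 * phi k n + z n) :
    Tendsto phi atTop (nhds phibar) := by
  set d : ℕ → ℝ := fun n => Real.tanh (lam n * T) ^ 2 with hd
  have hd0 : ∀ n, 0 ≤ d n := fun n => sq_nonneg _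
  have hd1 : ∀ n, d n < 1 := fun n => tanh_sq_lt_one _
  have hcons' : ∀ n, (1 - d n) * phibar n = z n := fun n => hcons n
  have hrec' : ∀ k n, phi (k + 1) n = d n * phi k n + z n := fun k n => hrec k n
  clear_value d
  clear hcons hrec hd
  -- key pointwise identity
  have key : ∀ k n, phi k n - phibar n = d n ^ k * (phi 0 n - phibar n) := by
    intro k
    induction k with
    | zero => intro n; simp
    | succ k ih =>
      intro n
      have hz : z n = phibar n - d n * phibar n := by linarith [hcons' n]
      rw [hrec' k n, hz, pow_succ]
      linear_combination d n * ih n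
  -- the ℓ² element ψ = phi 0 - phibar
  set ψ : lp (fun _ : ℕ => ℝ) 2 := phi 0 - phibar with hψ
  have h2R : ((2 : ENNReal)).toReal = (2:ℝ) := by norm_num
  have hψs : Summable (fun n => ‖ψ n‖ ^ (2:ℝ)) := by
    have := (lp.memℓp ψ).summable (p := 2) (by norm_num)
    simpa [h2R] using this
  have hψn : ∀ n, ψ n = phi 0 n - phibar n := by
    intro n; simp [hψ, lp.coeFn_sub, Pi.sub_apply]
  clear_value ψ
  clear hψ
  -- the squared-norm sequence tends to 0
  have hts : Tendsto (fun k => ∑' n, ‖(phi k - phibar) n‖ ^ (2:ℝ)) atTop (nhds 0) := by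
    have h0 : (0:ℝ) = ∑' n : ℕ, (0:ℝ) := by simp
    rw [h0]
    apply tendsto_tsum_of_dominated_convergence (bound := fun n => ‖ψ n‖ ^ (2:ℝ)) hψs
    · intro n
      have hlim : Tendsto (fun k : ℕ => d n ^ k) atTop (nhds 0) :=
        tendsto_pow_atTop_nhds_zero_of_lt_one (hd0 n) (hd1 n)
      have heq : ∀ k, ‖(phi k - phibar) n‖ ^ (2:ℝ) = (d n ^ k) ^ 2 * ‖ψ n‖ ^ (2:ℝ) := by
        intro k
        have h1 : (phi k - phibar) n = phi k n - phibar n := by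
          simp [lp.coeFn_sub, Pi.sub_apply]
        have h2 := hψn n
        rw [h1, key k n, ← h2, Real.rpow_two, Real.rpow_two,
          norm_mul, mul_pow, Real.norm_eq_abs (d n ^ k), sq_abs]
      simp only [heq]
      have h00 : (0:ℝ) = 0 ^ 2 * ‖ψ n‖ ^ (2:ℝ) := by norm_num
      rw [h00]
      exact (hlim.pow 2).mul_const _
    · filter_upwards with k n
      have h1 : (phi k - phibar) n = phi k n - phibar n := by
        simp [lp.coeFn_sub, Pi.sub_apply]
      have h2 := hψn n
      rw [Real.norm_eq_abs,
        abs_of_nonneg (by positivity : (0:ℝ) ≤ ‖(phi k - phibar) n‖ ^ (2:ℝ))]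
      rw [h1, key k n, ← h2, Real.norm_eq_abs, Real.norm_eq_abs,
        Real.rpow_two, Real.rpow_two, sq_abs, sq_abs, mul_pow]
      have hdk : d n ^ k ≤ 1 := pow_le_one₀ (hd0 n) (hd1 n).le
      have hsq : (d n ^ k) ^ 2 ≤ 1 := by nlinarith [pow_nonneg (hd0 n) k]
      nlinarith [sq_nonneg ((ψ : ∀ _ : ℕ, ℝ) n), hsq]
  -- conclude via the norm formula
  rw [tendsto_iff_norm_sub_tendsto_zero]
  have hnorm : ∀ k, ‖phi k - phibar‖ =
      (∑' n, ‖(phi k - phibar) n‖ ^ (2:ℝ)) ^ ((1:ℝ)/2) := by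
    intro k
    have := lp.norm_eq_tsum_rpow (p := 2) (by norm_num) (phi k - phibar)
    simpa [h2R] using this
  simp only [hnorm]
  have h00 : (0:ℝ) = (0:ℝ) ^ ((1:ℝ)/2) := by
    rw [Real.zero_rpow]; norm_num
  rw [h00]
  exact hts.rpow_const (Or.inr (by norm_num))
end

section
/- Let λ : ℕ → ℝ with λ_n > 0 for all n and T > 0 with sin(λ_n T) ≠ 0 for every n, and let z ∈ ℓ²(ℕ, ℝ). Suppose there exists φ̄ ∈ ℓ²(ℕ, ℝ) with (1 − cos(λ_n T)²) φ̄_n = z_n for all n. Then for every φ₀ ∈ ℓ²(ℕ, ℝ), the sequence defined recursively by φ_{k+1, n} = cos(λ_n T)² · φ_{k, n} + z_n converges in the ℓ² norm to φ̄ as k → ∞. -/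
open Filter

/-- Convergence of the Maz'ya–Kozlov iteration for the hyperbolic Dirichlet problem
in diagonalized form: if `(1 - cos(λₙT)²) φ̄ₙ = zₙ` for some `φ̄ ∈ ℓ²`, then for any
starting point the iteration `φ_{k+1,n} = cos(λₙT)² φ_{k,n} + zₙ` converges to `φ̄`
in `ℓ²`. -/
theorem stmt_10 (lam : ℕ → ℝ) (hlam : ∀ n, 0 < lam n) (T : ℝ) (hT : 0 < T)
    (hsin : ∀ n, Real.sin (lam n * T) ≠ 0)
    (z phibar : lp (fun _ : ℕ => ℝ) 2)
    (hcons : ∀ n, (1 - Real.cos (lam n * T) ^ 2) * phibar n = z n)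
    (phi : ℕ → lp (fun _ : ℕ => ℝ) 2)
    (hrec : ∀ (k : ℕ) (n : ℕ),
      phi (k + 1) n = Real.cos (lam n * T) ^ 2 * phi k n + z n) :
    Tendsto phi atTop (nhds phibar) := by
  set c : ℕ → ℝ := fun n => Real.cos (lam n * T) ^ 2 with hc
  have hc0 : ∀ n, 0 ≤ c n := fun n => sq_nonneg _
  have hc1 : ∀ n, c n < 1 := by
    intro n
    have h : Real.sin (lam n * T) ^ 2 + c n = 1 := Real.sin_sq_add_cos_sq (lam n * T)
    have hs : 0 < Real.sin (lam n * T) ^ 2 := pow_pos (abs_pos.mpr (hsin n)) 2 |>.trans_eq (by rw [sq_abs])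
    linarith
  -- key pointwise identity
  have key : ∀ k n, phi k n - phibar n = (c n) ^ k * (phi 0 n - phibar n) := by
    intro k
    induction k with
    | zero => intro n; simp
    | succ k ih =>
      intro n
      rw [hrec k n]
      simp only [hc] at ih ⊢
      linear_combination Real.cos (lam n * T) ^ 2 * ih n - hcons n
  -- convergence of squared norms
  have hp2 : (0:ℝ) < (2 : ENNReal).toReal := by norm_num
  have hbound : Summable fun n => ‖(phi 0 - phibar) n‖ ^ (2 : ENNReal).toReal :=
    (lp.hasSum_norm hp2 (phi 0 - phibar)).summable
  have hptw : ∀ k n, (phi k - phibar) n = (c n) ^ k * (phi 0 - phibar) n := by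
    intro k n
    simp only [lp.coeFn_sub, Pi.sub_apply]
    exact key k n
  have hsq : Tendsto (fun k => ∑' n, ‖(phi k - phibar) n‖ ^ (2 : ENNReal).toReal)
      atTop (nhds 0) := by
    have := tendsto_tsum_of_dominated_convergence (𝓕 := atTop)
      (f := fun k n => ‖(phi k - phibar) n‖ ^ (2 : ENNReal).toReal)
      (g := fun _ => (0:ℝ))
      (bound := fun n => ‖(phi 0 - phibar) n‖ ^ (2 : ENNReal).toReal)
      hbound ?_ ?_
    · simpa using this
    · intro n
      have hrw : (fun k => ‖(phi k - phibar) n‖ ^ (2 : ENNReal).toReal)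
          = fun k => ((c n) ^ 2) ^ k * ‖(phi 0 - phibar) n‖ ^ (2 : ENNReal).toReal := by
        funext k
        rw [hptw k n, norm_mul, Real.mul_rpow (norm_nonneg _) (norm_nonneg _)]
        congr 1
        rw [Real.norm_eq_abs, abs_pow, abs_of_nonneg (hc0 n)]
        rw [← Real.rpow_natCast (c n) k, ← Real.rpow_mul (hc0 n),
          ← Real.rpow_natCast ((c n) ^ 2) k, ← Real.rpow_natCast (c n) 2,
          ← Real.rpow_mul (hc0 n)]
        norm_num
        ring_nf
      rw [hrw]
      have hlim : Tendsto (fun k => ((c n) ^ 2) ^ k) atTop (nhds 0) := by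
        apply tendsto_pow_atTop_nhds_zero_of_lt_one (by positivity)
        nlinarith [hc0 n, hc1 n]
      simpa using hlim.mul_const _
    · filter_upwards with k n
      rw [Real.norm_rpow_of_nonneg (norm_nonneg _), norm_norm]
      apply Real.rpow_le_rpow (norm_nonneg _) _ hp2.le
      rw [hptw k n, norm_mul, Real.norm_eq_abs (c n ^ k), abs_pow, abs_of_nonneg (hc0 n)]
      exact mul_le_of_le_one_left (norm_nonneg _) (pow_le_one₀ (hc0 n) (hc1 n).le)
  -- from squared norm to norm
  have hnorm : Tendsto (fun k => ‖phi k - phibar‖) atTop (nhds 0) := by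
    have heq : ∀ k, ‖phi k - phibar‖
        = (∑' n, ‖(phi k - phibar) n‖ ^ (2 : ENNReal).toReal) ^ ((2 : ENNReal).toReal)⁻¹ := by
      intro k
      rw [← lp.norm_rpow_eq_tsum hp2, ← Real.rpow_mul (norm_nonneg _)]
      norm_num
    simp only [heq]
    have hcont : Tendsto (fun x : ℝ => x ^ ((2 : ENNReal).toReal)⁻¹) (nhds 0) (nhds 0) := by
      have := (Real.continuousAt_rpow_const 0 ((2 : ENNReal).toReal)⁻¹
        (Or.inr (by norm_num))).tendsto
      simpa [Real.zero_rpow (show ((2 : ENNReal).toReal)⁻¹ ≠ 0 by norm_num)] using this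
    exact hcont.comp hsq
  rw [tendsto_iff_norm_sub_tendsto_zero]
  exact hnorm
end

section
/- Let λ : ℕ → ℝ be a sequence with λ_n ≥ λ̄ > 0 for all n, let T > 0, and let γ be a parameter with 0 < γ < 2·exp(λ̄² T). The diagonal operator D_p on ℓ²(ℕ, ℝ) defined by (D_p x)_n = (1 − γ·exp(−λ_n² T)) · x_n is a bounded self-adjoint linear operator which is non-expansive (‖D_p‖ ≤ 1), 1 is not an eigenvalue of D_p, and D_p is asymptotically regular. If moreover γ < exp(λ̄² T) (equivalently γ < 2·exp(λ̃² T) with λ̃² = λ̄² − T⁻¹ ln 2), then all multipliers 1 − γ·exp(−λ_n² T) lie in (0,1), D_p is injective, and D_p satisfies ‖(I − D_p)x‖² ≤ ‖x‖² − ‖D_p x‖² for all x ∈ ℓ². -/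
/-!
`D_p` is the multiplication operator by the bounded sequence `aₙ = 1 - γ e^{-λₙ²T}`, so every
claim reduces to a coordinatewise one. From `λₙ ≥ λ̄` we get `0 < γ e^{-λₙ²T} < 2` (resp. `< 1`
under the stronger bound on `γ`), i.e. `|aₙ| < 1` (resp. `aₙ ∈ (0,1)`). Asymptotic regularity is
dominated convergence in `‖Dᵏ⁺¹x - Dᵏx‖² = ∑ (aₙᵏ⁺¹ - aₙᵏ)² xₙ²`, and the last inequality holds
term by term because `(1 - a)² ≤ 1 - a²` for `a ∈ [0,1]`.
-/

open Filter Topology Real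
open scoped lp ENNReal

namespace lp

variable {ι : Type*}

theorem norm_smul_id_le (a : ℓ^∞(ι, ℝ)) (i : ι) : ‖a i • ContinuousLinearMap.id ℝ ℝ‖ ≤ ‖a‖ := by
  simpa [norm_smul] using norm_apply_le_norm ENNReal.top_ne_zero a i

noncomputable def diagonal : ℓ^∞(ι, ℝ) →+* (ℓ²(ι, ℝ) →L[ℝ] ℓ²(ι, ℝ)) where
  toFun a :=
    lp.mapCLM 2 (fun i => a i • ContinuousLinearMap.id ℝ ℝ) (norm_nonneg a) (norm_smul_id_le a)
  map_one' := by ext; simp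
  map_mul' a b := by ext; simp [mul_assoc]
  map_zero' := by ext; simp
  map_add' a b := by ext; simp [add_mul]

@[simp]
theorem diagonal_apply (a : ℓ^∞(ι, ℝ)) (x : ℓ²(ι, ℝ)) (i : ι) : diagonal a x i = a i * x i := by
  simp [diagonal]

theorem norm_diagonal_le (a : ℓ^∞(ι, ℝ)) : ‖diagonal a‖ ≤ ‖a‖ :=
  norm_mapCLM_le 2 _ (norm_nonneg a) (norm_smul_id_le a)

theorem hasSum_sq (x : ℓ²(ι, ℝ)) : HasSum (fun i => x i ^ 2) (‖x‖ ^ 2) := by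
  simpa [← real_inner_self_eq_norm_sq, sq] using hasSum_inner (𝕜 := ℝ) x x

theorem isSelfAdjoint_diagonal (a : ℓ^∞(ι, ℝ)) : IsSelfAdjoint (diagonal a) := by
  rw [ContinuousLinearMap.isSelfAdjoint_iff_isSymmetric]
  intro x y
  simp only [ContinuousLinearMap.coe_coe, inner_eq_tsum, diagonal_apply]
  exact tsum_congr fun i => by simp; ring

theorem diagonal_injective {a : ℓ^∞(ι, ℝ)} (ha : ∀ i, a i ≠ 0) : Function.Injective (diagonal a) :=
  fun x y hxy => lp.ext <| funext fun i =>
    mul_left_cancel₀ (ha i) <| by simpa using congr($hxy i)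

theorem ker_one_sub_diagonal {a : ℓ^∞(ι, ℝ)} (ha : ∀ i, a i ≠ 1) :
    LinearMap.ker ((1 - diagonal a : ℓ²(ι, ℝ) →L[ℝ] ℓ²(ι, ℝ)) : ℓ²(ι, ℝ) →ₗ[ℝ] ℓ²(ι, ℝ)) = ⊥ := by
  rw [← map_one diagonal, ← map_sub, LinearMap.ker_eq_bot]
  refine diagonal_injective fun i => ?_
  simp only [coeFn_sub, infty_coeFn_one, Pi.sub_apply, Pi.one_apply, sub_ne_zero]
  exact (ha i).symm

theorem norm_sub_diagonal_sq_le {a : ℓ^∞(ι, ℝ)} (ha : ∀ i, a i ∈ Set.Icc 0 1) (x : ℓ²(ι, ℝ)) :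
    ‖x - diagonal a x‖ ^ 2 ≤ ‖x‖ ^ 2 - ‖diagonal a x‖ ^ 2 := by
  refine hasSum_le (fun i => ?_) (hasSum_sq _) ((hasSum_sq x).sub (hasSum_sq _))
  obtain ⟨h0, h1⟩ := ha i
  simp only [coeFn_sub, Pi.sub_apply, diagonal_apply]
  nlinarith [sq_nonneg (x i), mul_nonneg h0 (sub_nonneg.2 h1)]

theorem tendsto_diagonal_apply_zero {α : Type*} {l : Filter α} {b : α → ℓ^∞(ι, ℝ)} {C : ℝ}
    (hC : ∀ k i, |b k i| ≤ C) (hb : ∀ i, Tendsto (fun k => b k i) l (𝓝 0)) (x : ℓ²(ι, ℝ)) :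
    Tendsto (fun k => diagonal (b k) x) l (𝓝 0) := by
  have hsq : Tendsto (fun k => ‖diagonal (b k) x‖ ^ 2) l (𝓝 0) := by
    have := tendsto_tsum_of_dominated_convergence (f := fun k i => (b k i * x i) ^ 2)
      (g := fun _ => 0) (bound := fun i => C ^ 2 * x i ^ 2) ((hasSum_sq x).summable.mul_left _)
      (fun i => by simpa using ((hb i).mul_const (x i)).pow 2)
      (.of_forall fun k i => by
        rw [Real.norm_of_nonneg (sq_nonneg _), mul_pow]
        exact mul_le_mul_of_nonneg_right (sq_le_sq' (abs_le.1 (hC k i)).1 (abs_le.1 (hC k i)).2)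
          (sq_nonneg _))
    rw [tsum_zero] at this
    refine this.congr fun k => ?_
    simp [← (hasSum_sq (diagonal (b k) x)).tsum_eq]
  rw [tendsto_zero_iff_norm_tendsto_zero]
  simpa using hsq.sqrt

theorem tendsto_diagonal_pow_succ_sub_pow {a : ℓ^∞(ι, ℝ)} (ha : ∀ i, |a i| < 1) (x : ℓ²(ι, ℝ)) :
    Tendsto (fun k : ℕ => ‖(diagonal a ^ (k + 1)) x - (diagonal a ^ k) x‖) atTop (𝓝 0) := by
  have hbound (k : ℕ) (i : ι) : |(a ^ (k + 1) - a ^ k : ℓ^∞(ι, ℝ)) i| ≤ 2 := by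
    simp only [coeFn_sub, infty_coeFn_pow, Pi.sub_apply, Pi.pow_apply]
    refine (abs_sub _ _).trans ?_
    rw [abs_pow, abs_pow, ← one_add_one_eq_two]
    exact add_le_add (pow_le_one₀ (abs_nonneg _) (ha i).le) (pow_le_one₀ (abs_nonneg _) (ha i).le)
  have hlim (i : ι) : Tendsto (fun k : ℕ => (a ^ (k + 1) - a ^ k : ℓ^∞(ι, ℝ)) i) atTop (𝓝 0) := by
    simp only [coeFn_sub, infty_coeFn_pow, Pi.sub_apply, Pi.pow_apply]
    have h := tendsto_pow_atTop_nhds_zero_of_abs_lt_one (ha i)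
    simpa using (tendsto_add_atTop_iff_nat 1).2 h |>.sub h
  simpa using (tendsto_diagonal_apply_zero hbound hlim x).norm

end lp

theorem mul_exp_neg_sq_mul_lt {lbar l T γ c : ℝ} (hlbar : 0 ≤ lbar) (hl : lbar ≤ l) (hT : 0 ≤ T)
    (hγ0 : 0 ≤ γ) (hγ : γ < c * exp (lbar ^ 2 * T)) : γ * exp (-(l ^ 2 * T)) < c :=
  calc γ * exp (-(l ^ 2 * T)) ≤ γ * exp (-(lbar ^ 2 * T)) := by gcongr
    _ < c := by rwa [exp_neg, mul_inv_lt_iff₀ (exp_pos _)]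

theorem two_mul_exp_sub_inv_mul_log_two_mul {T : ℝ} (hT : T ≠ 0) (s : ℝ) :
    2 * exp ((s - T⁻¹ * log 2) * T) = exp (s * T) := by
  rw [sub_mul, mul_right_comm, inv_mul_cancel₀ hT, one_mul, exp_sub, exp_log two_pos]
  ring

/-- The diagonal operator on `ℓ²(ℕ, ℝ)` with multipliers `1 - γ·exp(-λₙ²T)`, where
`λₙ ≥ λ̄ > 0` and `0 < γ < 2·exp(λ̄²T)`, is a well-defined bounded self-adjoint
linear operator, non-expansive, `1` is not an eigenvalue, and asymptotically
regular. If moreover `γ < exp(λ̄²T)` (equivalently `γ < 2·exp(λ̃²T)` with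
`λ̃² = λ̄² - T⁻¹ ln 2`), all multipliers lie in `(0,1)`, the operator is injective
and satisfies the Maz'ya–Kozlov inequality. -/
theorem stmt_11 (lam : ℕ → ℝ) (lambar : ℝ) (hlamb : 0 < lambar)
    (hlam : ∀ n, lambar ≤ lam n) (T γ : ℝ) (hT : 0 < T)
    (hγpos : 0 < γ) (hγ : γ < 2 * Real.exp (lambar ^ 2 * T)) :
    ∃ D : lp (fun _ : ℕ => ℝ) 2 →L[ℝ] lp (fun _ : ℕ => ℝ) 2,
      (∀ (x : lp (fun _ : ℕ => ℝ) 2) (n : ℕ),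
        D x n = (1 - γ * Real.exp (-(lam n ^ 2 * T))) * x n) ∧
      IsSelfAdjoint D ∧
      ‖D‖ ≤ 1 ∧
      LinearMap.ker (((1 : lp (fun _ : ℕ => ℝ) 2 →L[ℝ] lp (fun _ : ℕ => ℝ) 2) - D :
        lp (fun _ : ℕ => ℝ) 2 →L[ℝ] lp (fun _ : ℕ => ℝ) 2) : lp (fun _ : ℕ => ℝ) 2 →ₗ[ℝ] lp (fun _ : ℕ => ℝ) 2) = ⊥ ∧
      (∀ x : lp (fun _ : ℕ => ℝ) 2,
        Tendsto (fun k : ℕ => ‖(D ^ (k + 1)) x - (D ^ k) x‖) atTop (nhds 0)) ∧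
      (γ < 2 * Real.exp ((lambar ^ 2 - T⁻¹ * Real.log 2) * T) →
        (∀ n, 1 - γ * Real.exp (-(lam n ^ 2 * T)) ∈ Set.Ioo (0 : ℝ) 1) ∧
        Function.Injective D ∧
        ∀ x : lp (fun _ : ℕ => ℝ) 2, ‖x - D x‖ ^ 2 ≤ ‖x‖ ^ 2 - ‖D x‖ ^ 2) := by
  set m : ℕ → ℝ := fun n => 1 - γ * exp (-(lam n ^ 2 * T))
  have hpos (n : ℕ) : 0 < γ * exp (-(lam n ^ 2 * T)) := by positivity
  have hm (n : ℕ) : |m n| < 1 := by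
    have := mul_exp_neg_sq_mul_lt hlamb.le (hlam n) hT.le hγpos.le hγ
    exact abs_lt.2 ⟨by linarith, by linarith [hpos n]⟩
  let a : ℓ^∞(ℕ, ℝ) := ⟨m, memℓp_infty ⟨1, Set.forall_mem_range.2 fun n => (hm n).le⟩⟩
  refine ⟨lp.diagonal a, lp.diagonal_apply a, lp.isSelfAdjoint_diagonal a,
    (lp.norm_diagonal_le a).trans (lp.norm_le_of_forall_le zero_le_one fun n => (hm n).le),
    lp.ker_one_sub_diagonal fun n => (abs_lt.1 (hm n)).2.ne,
    lp.tendsto_diagonal_pow_succ_sub_pow hm, fun hγ' => ?_⟩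
  rw [two_mul_exp_sub_inv_mul_log_two_mul hT.ne', ← one_mul (exp _)] at hγ'
  have hIoo (n : ℕ) : m n ∈ Set.Ioo 0 1 := by
    have := mul_exp_neg_sq_mul_lt hlamb.le (hlam n) hT.le hγpos.le hγ'
    exact ⟨by linarith, by linarith [hpos n]⟩
  exact ⟨hIoo, lp.diagonal_injective fun n => (hIoo n).1.ne',
    lp.norm_sub_diagonal_sq_le fun n => Set.Ioo_subset_Icc_self (hIoo n)⟩
end

section
/- Let λ : ℕ → ℝ with λ_n ≥ λ̄ > 0 for all n, let T > 0, let 0 < γ < 2·exp(λ̄² T), and let f ∈ ℓ²(ℕ, ℝ) be such that the sequence φ̄ with φ̄_n = exp(λ_n² T)·f_n also belongs to ℓ²(ℕ, ℝ). Then for every φ₀ ∈ ℓ²(ℕ, ℝ), the sequence defined recursively by φ_{k+1, n} = (1 − γ·exp(−λ_n² T)) · φ_{k, n} + γ·f_n converges in the ℓ² norm to φ̄ as k → ∞. -/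
open Filter

/-- Convergence of the Maz'ya–Kozlov iteration for the backward heat equation in
diagonalized form: if `f ∈ ℓ²` and the element `φ̄` with `φ̄ₙ = exp(λₙ²T) fₙ` also
lies in `ℓ²`, then for any starting point the iteration
`φ_{k+1,n} = (1 - γ·exp(-λₙ²T)) φ_{k,n} + γ fₙ` converges to `φ̄` in `ℓ²`. -/
theorem stmt_12 (lam : ℕ → ℝ) (lambar : ℝ) (hlamb : 0 < lambar)
    (hlam : ∀ n, lambar ≤ lam n) (T γ : ℝ) (hT : 0 < T)
    (hγpos : 0 < γ) (hγ : γ < 2 * Real.exp (lambar ^ 2 * T))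
    (f phibar : lp (fun _ : ℕ => ℝ) 2)
    (hphibar : ∀ n, phibar n = Real.exp (lam n ^ 2 * T) * f n)
    (phi : ℕ → lp (fun _ : ℕ => ℝ) 2)
    (hrec : ∀ (k : ℕ) (n : ℕ),
      phi (k + 1) n = (1 - γ * Real.exp (-(lam n ^ 2 * T))) * phi k n + γ * f n) :
    Tendsto phi atTop (nhds phibar) := by
  have hrp : ∀ x : ℝ, x ^ (2:ℝ) = x ^ 2 := by
    intro x
    rw [show ((2:ℝ)) = ((2:ℕ):ℝ) by norm_num, Real.rpow_natCast]
  set d : ℕ → ℝ := fun n => 1 - γ * Real.exp (-(lam n ^ 2 * T)) with hd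
  -- |d n| < 1
  have habs : ∀ n, |d n| < 1 := by
    intro n
    have hexp_pos : 0 < Real.exp (-(lam n ^ 2 * T)) := Real.exp_pos _
    have h1 : d n < 1 := by
      have := mul_pos hγpos hexp_pos
      simp only [hd]; linarith
    have h2 : -1 < d n := by
      have hle : Real.exp (-(lam n ^ 2 * T)) ≤ Real.exp (-(lambar ^ 2 * T)) := by
        apply Real.exp_le_exp.2
        have : lambar ^ 2 ≤ lam n ^ 2 := by
          have := hlam n
          nlinarith
        nlinarith
      have : γ * Real.exp (-(lam n ^ 2 * T)) ≤ γ * Real.exp (-(lambar ^ 2 * T)) :=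
        mul_le_mul_of_nonneg_left hle hγpos.le
      have hlt : γ * Real.exp (-(lambar ^ 2 * T)) < 2 := by
        rw [Real.exp_neg]
        rw [mul_inv_lt_iff₀ (Real.exp_pos _)]
        linarith
      simp only [hd]; linarith
    rw [abs_lt]; exact ⟨h2, h1⟩
  -- fixed point identity
  have hfix : ∀ n, (phibar : ℕ → ℝ) n = d n * phibar n + γ * f n := by
    intro n
    have hinv : Real.exp (-(lam n ^ 2 * T)) * Real.exp (lam n ^ 2 * T) = 1 := by
      rw [← Real.exp_add]; simp
    rw [hphibar n]
    simp only [hd]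
    have h : (1 - γ * Real.exp (-(lam n ^ 2 * T))) * (Real.exp (lam n ^ 2 * T) * (f : ℕ → ℝ) n)
        + γ * (f : ℕ → ℝ) n
        = Real.exp (lam n ^ 2 * T) * (f : ℕ → ℝ) n
          - γ * (Real.exp (-(lam n ^ 2 * T)) * Real.exp (lam n ^ 2 * T)) * (f : ℕ → ℝ) n
          + γ * (f : ℕ → ℝ) n := by ring
    rw [h, hinv]; ring
  -- pointwise error formula
  have herr : ∀ k n, (phi k : ℕ → ℝ) n - phibar n = d n ^ k * ((phi 0 : ℕ → ℝ) n - phibar n) := by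
    intro k
    induction k with
    | zero => intro n; simp
    | succ k ih =>
      intro n
      have h1 := hrec k n
      have h2 := hfix n
      calc (phi (k+1) : ℕ → ℝ) n - phibar n
          = d n * ((phi k : ℕ → ℝ) n - phibar n) := by
            simp only [hd] at h1 h2 ⊢
            linear_combination h1 - h2
        _ = d n ^ (k+1) * ((phi 0 : ℕ → ℝ) n - phibar n) := by rw [ih n]; ring
  -- norm squared tends to 0
  rw [tendsto_iff_norm_sub_tendsto_zero]
  set e0 : lp (fun _ : ℕ => ℝ) 2 := phi 0 - phibar with he0
  have hp2 : (0:ℝ) < (2 : ENNReal).toReal := by norm_num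
  have hsum0 : Summable (fun n => ‖(e0 : ℕ → ℝ) n‖ ^ 2) := by
    have := (lp.memℓp e0).summable hp2
    simpa [hrp] using this
  have hkey : Tendsto (fun k => ‖phi k - phibar‖ ^ 2) atTop (nhds 0) := by
    have heq : ∀ k, ‖phi k - phibar‖ ^ 2
        = ∑' n, ‖((phi k - phibar : lp (fun _ : ℕ => ℝ) 2) : ℕ → ℝ) n‖ ^ 2 := by
      intro k
      have := lp.norm_rpow_eq_tsum hp2 (phi k - phibar)
      simpa [hrp] using this
    simp only [heq]
    have h0 : (0:ℝ) = ∑' n : ℕ, (0:ℝ) := by simp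
    rw [h0]
    apply tendsto_tsum_of_dominated_convergence
      (bound := fun n => ‖(e0 : ℕ → ℝ) n‖ ^ 2) hsum0
    · intro n
      have hterm : ∀ k, ‖((phi k - phibar : lp (fun _ : ℕ => ℝ) 2) : ℕ → ℝ) n‖ ^ 2
          = (d n ^ 2) ^ k * ((phi 0 : ℕ → ℝ) n - phibar n) ^ 2 := by
        intro k
        have hc : ((phi k - phibar : lp (fun _ : ℕ => ℝ) 2) : ℕ → ℝ) n
            = d n ^ k * ((phi 0 : ℕ → ℝ) n - phibar n) := by
          simp [lp.coeFn_sub, herr k n]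
        rw [hc, Real.norm_eq_abs, abs_mul, mul_pow, sq_abs, sq_abs, ← pow_mul, ← pow_mul,
          Nat.mul_comm]
      simp only [hterm]
      have hdn : Tendsto (fun k => (d n ^ 2) ^ k) atTop (nhds 0) := by
        apply tendsto_pow_atTop_nhds_zero_of_abs_lt_one
        rw [abs_pow]
        exact pow_lt_one₀ (abs_nonneg _) (habs n) two_ne_zero
      have := hdn.mul_const (((phi 0 : ℕ → ℝ) n - phibar n) ^ 2)
      simpa using this
    · filter_upwards with k n
      have hc : ((phi k - phibar : lp (fun _ : ℕ => ℝ) 2) : ℕ → ℝ) n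
          = d n ^ k * ((phi 0 : ℕ → ℝ) n - phibar n) := by
        simp [lp.coeFn_sub, herr k n]
      have he0n : (e0 : ℕ → ℝ) n = (phi 0 : ℕ → ℝ) n - phibar n := by
        simp [he0, lp.coeFn_sub]
      rw [Real.norm_eq_abs (‖((phi k - phibar : lp (fun _ : ℕ => ℝ) 2) : ℕ → ℝ) n‖ ^ 2)]
      rw [abs_of_nonneg (by positivity : (0:ℝ) ≤ ‖((phi k - phibar : lp (fun _ : ℕ => ℝ) 2) : ℕ → ℝ) n‖ ^ 2)]
      rw [Real.norm_eq_abs, Real.norm_eq_abs, hc, he0n, abs_mul, mul_pow]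
      have h1 : |d n ^ k| ^ 2 ≤ 1 := by
        apply pow_le_one₀ (abs_nonneg _)
        rw [abs_pow]
        exact pow_le_one₀ (abs_nonneg _) (habs n).le
      have h2 : (0:ℝ) ≤ |(phi 0 : ℕ → ℝ) n - phibar n| ^ 2 := by positivity
      calc |d n ^ k| ^ 2 * |(phi 0 : ℕ → ℝ) n - phibar n| ^ 2
          ≤ 1 * |(phi 0 : ℕ → ℝ) n - phibar n| ^ 2 := by
            exact mul_le_mul_of_nonneg_right h1 h2
        _ = |(phi 0 : ℕ → ℝ) n - phibar n| ^ 2 := one_mul _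
  -- conclude
  have hsq : Tendsto (fun k => Real.sqrt (‖phi k - phibar‖ ^ 2)) atTop (nhds 0) := by
    have := hkey.sqrt
    simpa using this
  have hss : ∀ k, Real.sqrt (‖phi k - phibar‖ ^ 2) = ‖phi k - phibar‖ := fun k =>
    Real.sqrt_sq (norm_nonneg _)
  simpa only [hss] using hsq
end

section
/- Let λ : ℕ → ℝ with λ_n ≥ 0 for all n, let r > s > 0, let f, f_ε : ℕ → ℝ, and let ε > 0 satisfy: M² := Σ_n (1 + λ_n²)^r f_n² < ∞, Σ_n (f_n − f_{ε,n})² ≤ ε, and ε < M². Set h := ((M²/ε)^{1/r} − 1)^{−1/2} > 0 and define the truncated sequence g by g_n = f_{ε,n} if λ_n ≤ 1/h and g_n = 0 otherwise. Then Σ_n (1 + λ_n²)^s (f_n − g_n)² ≤ 4 · ε^{(r−s)/r} · M^{2s/r}. -/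
/-! Write `A := 1 + h⁻²` for the cut-off weight. Below the cut-off the weight `(1 + λ_n²)^s` is at
most `A^s`, so the kept components cost at most `A^s ε`; above it `g_n = 0` and
`(1 + λ_n²)^s ≤ A^(s-r) (1 + λ_n²)^r`, so the discarded ones cost at most `A^(s-r) M²`.
The choice `A = (M²/ε)^(1/r)` balances the two terms, each equal to `ε^((r-s)/r) (M²)^(s/r)`. -/

open Real

theorem rpow_mul_sq_sub_ite_le {w A s r : ℝ} (hw : 0 < w) (hA : 0 < A) (hs : 0 ≤ s)
    (hsr : s ≤ r) (x y : ℝ) :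
    w ^ s * (x - if w ≤ A then y else 0) ^ 2 ≤
      A ^ s * (x - y) ^ 2 + A ^ (s - r) * (w ^ r * x ^ 2) := by
  split_ifs with hwA
  · have hkept : w ^ s * (x - y) ^ 2 ≤ A ^ s * (x - y) ^ 2 := by gcongr
    have : 0 ≤ A ^ (s - r) * (w ^ r * x ^ 2) := by positivity
    linarith
  · have hweight : w ^ s = w ^ (s - r) * w ^ r := by
      rw [← rpow_add hw, sub_add_cancel]
    have : w ^ (s - r) ≤ A ^ (s - r) :=
      rpow_le_rpow_of_nonpos hA (not_le.mp hwA).le (by linarith)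
    have hdiscarded : w ^ s * x ^ 2 ≤ A ^ (s - r) * (w ^ r * x ^ 2) := by
      rw [hweight, mul_assoc]; gcongr
    have : 0 ≤ A ^ s * (x - y) ^ 2 := by positivity
    rw [sub_zero]; linarith

theorem summable_and_tsum_rpow_mul_sq_sub_truncate_le {w f fe g : ℕ → ℝ} {A s r : ℝ}
    (hw : ∀ n, 0 < w n) (hA : 0 < A) (hs : 0 ≤ s) (hsr : s ≤ r)
    (hf : Summable fun n => w n ^ r * f n ^ 2) (hfe : Summable fun n => (f n - fe n) ^ 2)
    (hg : ∀ n, g n = if w n ≤ A then fe n else 0) :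
    (Summable fun n => w n ^ s * (f n - g n) ^ 2) ∧
      ∑' n, w n ^ s * (f n - g n) ^ 2 ≤
        A ^ s * ∑' n, (f n - fe n) ^ 2 + A ^ (s - r) * ∑' n, w n ^ r * f n ^ 2 := by
  have hle : ∀ n, w n ^ s * (f n - g n) ^ 2 ≤
      A ^ s * (f n - fe n) ^ 2 + A ^ (s - r) * (w n ^ r * f n ^ 2) := fun n => by
    rw [hg n]; exact rpow_mul_sq_sub_ite_le (hw n) hA hs hsr _ _
  have hbound := (hfe.mul_left (A ^ s)).add (hf.mul_left (A ^ (s - r)))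
  have hsum : Summable fun n => w n ^ s * (f n - g n) ^ 2 :=
    hbound.of_nonneg_of_le (fun n => mul_nonneg (rpow_nonneg (hw n).le _) (sq_nonneg _)) hle
  refine ⟨hsum, ?_⟩
  calc ∑' n, w n ^ s * (f n - g n) ^ 2
      ≤ ∑' n, (A ^ s * (f n - fe n) ^ 2 + A ^ (s - r) * (w n ^ r * f n ^ 2)) :=
        hsum.tsum_le_tsum hle hbound
    _ = _ := by
      rw [(hfe.mul_left _).tsum_add (hf.mul_left _), tsum_mul_left, tsum_mul_left]

theorem one_add_sq_one_div_rpow_neg_half {A : ℝ} (hA : 1 ≤ A) :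
    1 + (1 / (A - 1) ^ (-(1 / 2 : ℝ))) ^ 2 = A := by
  rw [rpow_neg (by linarith), one_div, inv_inv, ← rpow_natCast, ← rpow_mul (by linarith)]
  norm_num

theorem div_rpow_one_div_rpow_mul {a b : ℝ} (ha : 0 < a) (hb : 0 < b) {r : ℝ} (hr : r ≠ 0)
    (s : ℝ) : ((a / b) ^ (1 / r)) ^ s * b = b ^ ((r - s) / r) * a ^ (s / r) := by
  rw [sub_div, div_self hr, ← rpow_mul (div_pos ha hb).le, div_rpow ha.le hb.le, rpow_sub hb,
    rpow_one]
  field_simp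

theorem div_rpow_one_div_rpow_sub_mul {a b : ℝ} (ha : 0 < a) (hb : 0 < b) {r : ℝ} (hr : r ≠ 0)
    (s : ℝ) : ((a / b) ^ (1 / r)) ^ (s - r) * a = ((a / b) ^ (1 / r)) ^ s * b := by
  have hpos : 0 < (a / b) ^ (1 / r) := by positivity
  rw [rpow_sub hpos, one_div, rpow_inv_rpow (div_pos ha hb).le hr]
  field_simp

/-- Smoothing lemma in diagonal form: from `ℓ²`-noisy data `f_ε` at distance `√ε`
from a smooth element `f ∈ H^r`, truncation at frequency `1/h` with
`h = ((M²/ε)^{1/r} - 1)^{-1/2}` produces `g ∈ H^s` with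
`‖f - g‖_s² ≤ 4 ε^{(r-s)/r} M^{2s/r}`. -/
theorem stmt_13 (lam : ℕ → ℝ) (hlam : ∀ n, 0 ≤ lam n) (r s : ℝ)
    (hs : 0 < s) (hrs : s < r) (f feps : ℕ → ℝ) (ε M : ℝ) (hε : 0 < ε)
    (hsum : Summable fun n => (1 + lam n ^ 2) ^ r * f n ^ 2)
    (hM : M ^ 2 = ∑' n, (1 + lam n ^ 2) ^ r * f n ^ 2)
    (hsum2 : Summable fun n => (f n - feps n) ^ 2)
    (hnoise : ∑' n, (f n - feps n) ^ 2 ≤ ε)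
    (hεM : ε < M ^ 2)
    (h : ℝ) (hh : h = ((M ^ 2 / ε) ^ (1 / r) - 1) ^ (-(1 / 2 : ℝ)))
    (g : ℕ → ℝ) (hg : ∀ n, g n = if lam n ≤ 1 / h then feps n else 0) :
    (Summable fun n => (1 + lam n ^ 2) ^ s * (f n - g n) ^ 2) ∧
      ∑' n, (1 + lam n ^ 2) ^ s * (f n - g n) ^ 2 ≤
        4 * ε ^ ((r - s) / r) * (M ^ 2) ^ (s / r) := by
  have hr : 0 < r := hs.trans hrs
  have hM2 : 0 < M ^ 2 := hε.trans hεM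
  set A := (M ^ 2 / ε) ^ (1 / r)
  have hA : 1 ≤ A := one_le_rpow ((one_le_div hε).2 hεM.le) (by positivity)
  have hcutoff : 1 + (1 / h) ^ 2 = A := by rw [hh]; exact one_add_sq_one_div_rpow_neg_half hA
  have hh0 : 0 ≤ 1 / h := by rw [hh]; positivity
  have htrunc : ∀ n, g n = if 1 + lam n ^ 2 ≤ A then feps n else 0 := fun n => by
    simp only [hg n, ← hcutoff, add_le_add_iff_left, pow_le_pow_iff_left₀ (hlam n) hh0 two_ne_zero]
  obtain ⟨hsummable, hle⟩ := summable_and_tsum_rpow_mul_sq_sub_truncate_le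
    (fun n => by positivity) (by positivity) hs.le hrs.le hsum hsum2 htrunc
  refine ⟨hsummable, ?_⟩
  have hrate : 0 ≤ ε ^ ((r - s) / r) * (M ^ 2) ^ (s / r) := by positivity
  calc ∑' n, (1 + lam n ^ 2) ^ s * (f n - g n) ^ 2
      ≤ A ^ s * ε + A ^ (s - r) * M ^ 2 := by
        rw [hM]; exact hle.trans (by gcongr)
    _ = 2 * (ε ^ ((r - s) / r) * (M ^ 2) ^ (s / r)) := by
      rw [div_rpow_one_div_rpow_sub_mul hM2 hε hr.ne', div_rpow_one_div_rpow_mul hM2 hε hr.ne']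
      ring
    _ ≤ 4 * ε ^ ((r - s) / r) * (M ^ 2) ^ (s / r) := by linarith
end
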